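/- Let G be a finite simple connected graph of order n with dim(G) = res(G) = k where k ≥ 2. Then C(n, k−1) ≤ C(n, 2), where C denotes the binomial coefficient. -/

import Mathlib

/-- `S` is a resolving set of `G`: every pair of distinct vertices is resolved
by some vertex of `S`, i.e. some `u ∈ S` has different distances to the two vertices. -/
def IsResolvingSet {V : Type*} (G : SimpleGraph V) (S : Set V) : Prop :=
  ∀ x y : V, x ≠ y → ∃ u ∈ S, G.dist u x ≠ G.dist u y

/-- The metric dimension of `G`: minimum size of a resolving set. -/
noncomputable def metricDim {V : Type*} [Fintype V] (G : SimpleGraph V) : ℕ :=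
  sInf {k | ∃ S : Finset V, S.card = k ∧ IsResolvingSet G ↑S}

/-- The upper dimension of `G`: maximum size of a minimal resolving set. -/
noncomputable def upperDim {V : Type*} [Fintype V] (G : SimpleGraph V) : ℕ :=
  sSup {k | ∃ S : Finset V, S.card = k ∧ IsResolvingSet G ↑S ∧
    ∀ T : Finset V, T ⊂ S → ¬ IsResolvingSet G ↑T}

/-- The resolving number of `G`: minimum `k` such that every `k`-subset of
the vertex set is a resolving set. -/
noncomputable def resolvingNumber {V : Type*} [Fintype V] (G : SimpleGraph V) : ℕ :=
  sInf {k | ∀ S : Finset V, S.card = k → IsResolvingSet G ↑S}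

/-!
A set `S` fails to resolve a pair `{x, y}` exactly when it lies inside the equidistant set
`R{x, y} = {u | d(u, x) = d(u, y)}`. Since `res(G) = k`, every `R{x, y}` has fewer than `k`
vertices; since `dim(G) = k`, no `(k - 1)`-set resolves `G`. Hence every `(k - 1)`-set is
contained in, and so equal to, some `R{x, y}`, and `{x, y} ↦ R{x, y}` maps the `2`-sets onto
the `(k - 1)`-sets.
-/

open Finset

section

variable {V : Type*} (G : SimpleGraph V)

noncomputable def SimpleGraph.equidistantFinset [Fintype V] (P : Finset V) : Finset V :=
  univ.filter fun u => ∀ x ∈ P, ∀ y ∈ P, G.dist u x = G.dist u y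

variable {G}

theorem mem_equidistantFinset_pair [Fintype V] [DecidableEq V] {x y u : V} :
    u ∈ G.equidistantFinset {x, y} ↔ G.dist u x = G.dist u y := by
  simp only [SimpleGraph.equidistantFinset, mem_filter, mem_univ, true_and, mem_insert,
    mem_singleton, forall_eq_or_imp, forall_eq, and_true]
  exact ⟨fun h => h.1, fun h => ⟨h, h.symm⟩⟩

theorem IsResolvingSet.mono {S T : Set V} (hS : IsResolvingSet G S) (hST : S ⊆ T) :
    IsResolvingSet G T := fun x y hxy =>
  let ⟨u, hu, hne⟩ := hS x y hxy
  ⟨u, hST hu, hne⟩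

theorem SimpleGraph.Connected.isResolvingSet_univ (hconn : G.Connected) :
    IsResolvingSet G Set.univ :=
  fun x y hxy => ⟨x, trivial, by rw [dist_self]; exact (hconn.pos_dist_of_ne hxy).ne⟩

theorem not_isResolvingSet_iff {S : Set V} :
    ¬ IsResolvingSet G S ↔ ∃ x y, x ≠ y ∧ ∀ u ∈ S, G.dist u x = G.dist u y := by
  simp only [IsResolvingSet, not_forall, not_exists, not_and, not_not, exists_prop]

section Fintype

variable [Fintype V]

theorem metricDim_le_card {S : Finset V} (hS : IsResolvingSet G S) : metricDim G ≤ #S :=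
  Nat.sInf_le ⟨S, rfl, hS⟩

theorem SimpleGraph.Connected.isResolvingSet_of_card_eq_resolvingNumber (hconn : G.Connected)
    {S : Finset V} (hS : #S = resolvingNumber G) : IsResolvingSet G S := by
  classical
  have hne : {k | ∀ S : Finset V, #S = k → IsResolvingSet G ↑S}.Nonempty :=
    ⟨Fintype.card V, fun S hS => by
      rw [(card_eq_iff_eq_univ S).mp hS, coe_univ]
      exact hconn.isResolvingSet_univ⟩
  exact Nat.sInf_mem hne S hS

theorem SimpleGraph.Connected.isResolvingSet_of_resolvingNumber_le_card (hconn : G.Connected)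
    {S : Finset V} (hS : resolvingNumber G ≤ #S) : IsResolvingSet G S :=
  let ⟨_, hTS, hT⟩ := exists_subset_card_eq hS
  (hconn.isResolvingSet_of_card_eq_resolvingNumber hT).mono (coe_subset.mpr hTS)

theorem SimpleGraph.Connected.card_equidistantFinset_pair_lt [DecidableEq V]
    (hconn : G.Connected) {x y : V} (hxy : x ≠ y) :
    #(G.equidistantFinset {x, y}) < resolvingNumber G := by
  by_contra! hle
  obtain ⟨u, hu, hne⟩ := hconn.isResolvingSet_of_resolvingNumber_le_card hle x y hxy
  exact hne (mem_equidistantFinset_pair.mp hu)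

theorem SimpleGraph.Connected.exists_eq_equidistantFinset (hconn : G.Connected) {S : Finset V}
    (hdim : #S < metricDim G) (hres : resolvingNumber G ≤ #S + 1) :
    ∃ P ∈ powersetCard 2 (univ : Finset V), G.equidistantFinset P = S := by
  classical
  have hS : ¬ IsResolvingSet G S := fun h => (metricDim_le_card h).not_gt hdim
  obtain ⟨x, y, hxy, hsub⟩ := not_isResolvingSet_iff.mp hS
  refine ⟨{x, y}, mem_powersetCard_univ.mpr (card_pair hxy), ?_⟩
  have hsubset : S ⊆ G.equidistantFinset {x, y} := fun u hu =>
    mem_equidistantFinset_pair.mpr (hsub u hu)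
  have hcard := hconn.card_equidistantFinset_pair_lt hxy
  exact (eq_of_subset_of_card_le hsubset (by omega)).symm

end Fintype

end

theorem stmt6_general {V : Type*} [Fintype V] (G : SimpleGraph V)
    (hconn : G.Connected) (n k : ℕ) (hn : Fintype.card V = n) (hk : 2 ≤ k)
    (hdim : metricDim G = k) (hres : resolvingNumber G = k) :
    n.choose (k - 1) ≤ n.choose 2 := by
  have hsurj : Set.SurjOn G.equidistantFinset
      ↑(powersetCard 2 (univ : Finset V)) ↑(powersetCard (k - 1) (univ : Finset V)) :=
    fun S hS => by
      have hS : #S = k - 1 := mem_powersetCard_univ.mp hS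
      exact hconn.exists_eq_equidistantFinset (by omega) (by omega)
  simpa only [card_powersetCard, card_univ, hn] using card_le_card_of_surjOn _ hsurj

/-- if `G` is a finite simple connected graph of order `n` with
`dim(G) = res(G) = k` and `k ≥ 2`, then `C(n, k-1) ≤ C(n, 2)`. -/
theorem stmt6 {V : Type*} [Fintype V] [DecidableEq V] (G : SimpleGraph V)
    (hconn : G.Connected) (n k : ℕ) (hn : Fintype.card V = n) (hk : 2 ≤ k)
    (hdim : metricDim G = k) (hres : resolvingNumber G = k) :
    n.choose (k - 1) ≤ n.choose 2 :=
  stmt6_general G hconn n k hn hk hdim hres
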